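/- Let Ψ : ℝ^n → ℝ^K be differentiable with the operator norm of its derivative bounded by Γ at every point, let z_1, …, z_M ∈ ℝ^n be data points with ‖Ψ(z_m)‖₂ ≤ Λ for all m, and let δz_1, …, δz_M ∈ ℝ^n be perturbations with ‖δz_m‖₂ ≤ λ for all m. Define the K×K matrix δG = (1/M) Σ_{m=1}^M Ψ(z_m) (Ψ(z_m + δz_m) − Ψ(z_m))ᵀ (outer products of column vectors). Then the Frobenius norm of δG satisfies ‖δG‖_F ≤ λ Λ Γ. -/

import Mathlib

open scoped BigOperators

/-- Frobenius norm of a real matrix: `‖M‖_F = sqrt (∑ i j, M i j ^ 2)`. -/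
noncomputable def frobeniusNorm {m n : ℕ} (M : Matrix (Fin m) (Fin n) ℝ) : ℝ :=
  Real.sqrt (∑ i, ∑ j, (M i j) ^ 2)

/-!
`δG` is the average over `m` of the outer products `Ψ(z_m) (Ψ(z_m + δz_m) − Ψ(z_m))ᵀ`. An outer
product `u vᵀ` is a column times a row, so by submultiplicativity of the Frobenius norm it has
norm at most `‖u‖ ‖v‖`; the mean value theorem bounds `‖Ψ(z_m + δz_m) − Ψ(z_m)‖` by `Γ λ`, and
by the triangle inequality an average is no larger than the common bound of its terms.
-/

open Matrix WithLp

theorem Matrix.of_mul_sum_eq_smul_sum_vecMulVec {ι m n α : Type*} [Fintype ι] [CommSemiring α]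
    (c : α) (u : ι → m → α) (v : ι → n → α) :
    Matrix.of (fun i j => c * ∑ k, u k i * v k j) = c • ∑ k, vecMulVec (u k) (v k) := by
  ext i j
  simp [Matrix.sum_apply, vecMulVec_apply]

theorem norm_inv_card_smul_sum_le {ι E : Type*} [Fintype ι] [Nonempty ι]
    [SeminormedAddCommGroup E] [NormedSpace ℝ E] {f : ι → E} {C : ℝ} (hf : ∀ i, ‖f i‖ ≤ C) :
    ‖(Fintype.card ι : ℝ)⁻¹ • ∑ i, f i‖ ≤ C := by
  have hcard : (0 : ℝ) < Fintype.card ι := Nat.cast_pos.mpr Fintype.card_pos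
  calc ‖(Fintype.card ι : ℝ)⁻¹ • ∑ i, f i‖
      ≤ (Fintype.card ι : ℝ)⁻¹ * ∑ i, ‖f i‖ := by
        rw [norm_smul, norm_inv, Real.norm_natCast]
        gcongr
        exact norm_sum_le _ _
    _ ≤ (Fintype.card ι : ℝ)⁻¹ * (Fintype.card ι * C) := by
        gcongr
        exact (Finset.sum_le_sum fun i _ => hf i).trans_eq (by simp)
    _ = C := by field_simp

section Frobenius

attribute [local instance] Matrix.frobeniusNormedAddCommGroup Matrix.frobeniusNormedSpace

theorem frobeniusNorm_eq_norm {m n : ℕ} (A : Matrix (Fin m) (Fin n) ℝ) :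
    frobeniusNorm A = ‖A‖ := by
  simp [frobeniusNorm, frobenius_norm_def, Real.sqrt_eq_rpow]

theorem Matrix.frobenius_norm_vecMulVec_le {m n α : Type*} [Fintype m] [Fintype n] [RCLike α]
    (u : m → α) (v : n → α) : ‖vecMulVec u v‖ ≤ ‖toLp 2 u‖ * ‖toLp 2 v‖ := by
  rw [vecMulVec_eq Unit, ← frobenius_norm_replicateCol (ι := Unit),
    ← frobenius_norm_replicateRow (ι := Unit)]
  exact frobenius_norm_mul _ _

theorem deltaG_frobenius_bound_general (n K M : ℕ) (hM : 0 < M)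
    (Ψ : EuclideanSpace ℝ (Fin n) → EuclideanSpace ℝ (Fin K))
    (Γ Λ lam : ℝ)
    (hdiff : Differentiable ℝ Ψ)
    (hΓ : ∀ z : EuclideanSpace ℝ (Fin n), ‖fderiv ℝ Ψ z‖ ≤ Γ)
    (z δz : Fin M → EuclideanSpace ℝ (Fin n))
    (hΛ : ∀ m, ‖Ψ (z m)‖ ≤ Λ)
    (hlam : ∀ m, ‖δz m‖ ≤ lam) :
    frobeniusNorm (Matrix.of fun i j : Fin K =>
        (1 / (M : ℝ)) * ∑ m : Fin M, Ψ (z m) i * (Ψ (z m + δz m) j - Ψ (z m) j)) ≤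
      lam * Λ * Γ := by
  have hΓ₀ : 0 ≤ Γ := (norm_nonneg _).trans (hΓ 0)
  have hδΨ : ∀ m, ‖Ψ (z m + δz m) - Ψ (z m)‖ ≤ Γ * lam := fun m =>
    calc ‖Ψ (z m + δz m) - Ψ (z m)‖ ≤ Γ * ‖z m + δz m - z m‖ :=
          convex_univ.norm_image_sub_le_of_norm_fderiv_le (fun x _ => hdiff x) (fun x _ => hΓ x)
            trivial trivial
      _ ≤ Γ * lam := by rw [add_sub_cancel_left]; gcongr; exact hlam m
  have hterm : ∀ m, ‖vecMulVec (ofLp (Ψ (z m))) (ofLp (Ψ (z m + δz m) - Ψ (z m)))‖ ≤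
      lam * Λ * Γ := fun m =>
    calc _ ≤ ‖Ψ (z m)‖ * ‖Ψ (z m + δz m) - Ψ (z m)‖ := frobenius_norm_vecMulVec_le _ _
      _ ≤ Λ * (Γ * lam) := mul_le_mul (hΛ m) (hδΨ m) (norm_nonneg _) ((norm_nonneg _).trans (hΛ m))
      _ = lam * Λ * Γ := by ring
  have : Nonempty (Fin M) := ⟨⟨0, hM⟩⟩
  have hG := of_mul_sum_eq_smul_sum_vecMulVec (1 / (M : ℝ)) (fun m => ofLp (Ψ (z m)))
    (fun m => ofLp (Ψ (z m + δz m) - Ψ (z m)))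
  simp only [PiLp.sub_apply] at hG
  rw [frobeniusNorm_eq_norm, hG, one_div]
  simpa only [Fintype.card_fin] using norm_inv_card_smul_sum_le hterm

/-- If `Ψ : ℝ^n → ℝ^K` is differentiable with derivative bounded in operator norm by `Γ`,
the data points satisfy `‖Ψ(z_m)‖₂ ≤ Λ` and the perturbations satisfy `‖δz_m‖₂ ≤ λ`, then the
perturbation `δG = (1/M) ∑ₘ Ψ(z_m) (Ψ(z_m + δz_m) − Ψ(z_m))ᵀ` of the Gram-type matrix
satisfies `‖δG‖_F ≤ λ Λ Γ`. -/
theorem deltaG_frobenius_bound (n K M : ℕ) (hK : 0 < K) (hM : 0 < M)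
    (Ψ : EuclideanSpace ℝ (Fin n) → EuclideanSpace ℝ (Fin K))
    (Γ Λ lam : ℝ)
    (hdiff : Differentiable ℝ Ψ)
    (hΓ : ∀ z : EuclideanSpace ℝ (Fin n), ‖fderiv ℝ Ψ z‖ ≤ Γ)
    (z δz : Fin M → EuclideanSpace ℝ (Fin n))
    (hΛ : ∀ m, ‖Ψ (z m)‖ ≤ Λ)
    (hlam : ∀ m, ‖δz m‖ ≤ lam) :
    frobeniusNorm (Matrix.of fun i j : Fin K =>
        (1 / (M : ℝ)) * ∑ m : Fin M, Ψ (z m) i * (Ψ (z m + δz m) j - Ψ (z m) j)) ≤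
      lam * Λ * Γ :=
  deltaG_frobenius_bound_general n K M hM Ψ Γ Λ lam hdiff hΓ z δz hΛ hlam

end Frobenius
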